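/- Let A = P₁ − R₁ + S₁ = P₂ − R₂ + S₂ = P₃ − R₃ + S₃ = P₄ − R₄ + S₄ be four double proper weak regular splittings of a semi-monotone matrix A ∈ ℝ^{m×n}. Suppose N(S₂) ⊇ N(P₂), R(S₂) ⊆ R(P₂), N(S₄) ⊇ N(P₄), R(S₄) ⊆ R(P₄), I − S₂P₁† and I − S₄P₃† are nonsingular, and Â₁† ≥ 0, Â₂† ≥ 0, where Â₁ = (I − S₂P₁†)A and Â₂ = (I − S₄P₃†)A. Setting P̂₁ = P₂, R̂₁ = R₂ − S₂P₁†R₁, P̂₂ = P₄, R̂₂ = R₄ − S₄P₃†R₃, if P̂₁†Â₁ ≥ P̂₂†Â₂ and P̂₁†R̂₁ ≥ P̂₂†R̂₂, then ρ(W₁₂) ≤ ρ(W₃₄) < 1, where W₁₂ = [[P₂†R₂ − P₂†S₂P₁†R₁, P₂†S₂P₁†S₁], [I, 0]] and W₃₄ = [[P₄†R₄ − P₄†S₄P₃†R₃, P₄†S₄P₃†S₃], [I, 0]]. -/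

import Mathlib

open Matrix

/-- Spectral radius of a real square matrix: the maximum modulus of its complex eigenvalues. -/
noncomputable def specRad {ι : Type*} [Fintype ι] [DecidableEq ι] (M : Matrix ι ι ℝ) : ℝ :=
  sSup ((fun z : ℂ => ‖z‖) '' spectrum ℂ (M.map Complex.ofReal))

/-- `X` satisfies the four Penrose equations for `A`, i.e. `X` is the Moore-Penrose
inverse of `A`. -/
def IsMP {m n : ℕ} (A : Matrix (Fin m) (Fin n) ℝ) (X : Matrix (Fin n) (Fin m) ℝ) : Prop :=
  A * X * A = A ∧ X * A * X = X ∧ (A * X)ᵀ = A * X ∧ (X * A)ᵀ = X * A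

/-- Entrywise comparison of matrices: `MatLE A B` means `A ≤ B` entrywise. -/
def MatLE {m n : ℕ} (A B : Matrix (Fin m) (Fin n) ℝ) : Prop := ∀ i j, A i j ≤ B i j

/-!
Each pair of splittings induces a single splitting `Â = P̂ - N̂` of `Â = (I - S₂P₁†)A`, with
`P̂ = P₂` and `N̂ = R₂ - S₂P₁†R₁ + S₂P₁†S₁`, and `H := P̂†N̂ = B + C` where `W = [[B, C], [I, 0]]`.
For the projector `Q = P̂†P̂` one has `HQ = H` and `(Q - H)Â† = P̂†`, so the partial sums of
`∑ Hʲ P̂†` equal `QÂ† - Hᵏ⁺¹Â† ≤ QÂ†`: this nonnegative series converges, hence `Hᵏ → 0`.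

An eigenvector `(x, y)` of `W` for `μ` has `x = μy` and `μ²y = μBy + Cy`, so `w = |y|` satisfies
`|μ|²w ≤ (|μ|B + C)w`; conversely such a `w ≥ 0` makes `(sw, w)` a nonnegative sub-eigenvector
of `W`, whence `s ≤ ρ(W)` by Gelfand's formula. For `|μ| = ρ(W) ≥ 1` the first inequality gives
`w ≤ Hᵏw → 0`, so `ρ(W) < 1`; and for `ρ = ρ(W₁₂) ≤ 1` the hypotheses give
`ρB₁ + C₁ ≤ ρB₂ + C₂`, so `(ρw, w)` is a sub-eigenvector of `W₃₄`.
-/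

open Filter Topology

section GeneralizedInverse

variable {K : Type*} [CommRing K] {l m n : Type*} [Fintype m] [Fintype n]

lemma mul_mul_eq_of_ker_le {P : Matrix m n K} {X : Matrix n m K} {S : Matrix l n K}
    (hP : P * X * P = P) (h : LinearMap.ker P.mulVecLin ≤ LinearMap.ker S.mulVecLin) :
    S * X * P = S := by
  refine Matrix.ext_iff_mulVec.2 fun v => ?_
  have hv : v - X *ᵥ P *ᵥ v ∈ LinearMap.ker P.mulVecLin := by
    simp [Matrix.mulVec_sub, Matrix.mulVec_mulVec, ← Matrix.mul_assoc, hP]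
  have := h hv
  simp only [LinearMap.mem_ker, Matrix.mulVecLin_apply, Matrix.mulVec_sub, sub_eq_zero] at this
  simp [← Matrix.mulVec_mulVec, this]

lemma mul_mul_eq_of_range_le [Fintype l] {P : Matrix m n K} {X : Matrix n m K} {S : Matrix m l K}
    (hP : P * X * P = P) (h : LinearMap.range S.mulVecLin ≤ LinearMap.range P.mulVecLin) :
    P * X * S = S := by
  refine Matrix.ext_iff_mulVec.2 fun v => ?_
  obtain ⟨w, hw⟩ := h ⟨v, rfl⟩
  simp only [Matrix.mulVecLin_apply] at hw
  rw [← Matrix.mulVec_mulVec, ← hw, Matrix.mulVec_mulVec, hP]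

end GeneralizedInverse

lemma range_mulVecLin_mul_eq_of_isUnit {K : Type*} [Field K] {m n : Type*} [Fintype m]
    [DecidableEq m] [Fintype n] {F : Matrix m m K} {A : Matrix m n K} (hF : IsUnit F)
    (h : LinearMap.range (F * A).mulVecLin ≤ LinearMap.range A.mulVecLin) :
    LinearMap.range (F * A).mulVecLin = LinearMap.range A.mulVecLin :=
  Submodule.eq_of_le_of_finrank_eq h
    (Matrix.rank_mul_eq_right_of_isUnit_det F A ((Matrix.isUnit_iff_isUnit_det F).1 hF))

section MoorePenrose

variable {m n : ℕ}

lemma IsMP.mul_eq_mul_of_range_eq {P Q : Matrix (Fin m) (Fin n) ℝ} {X Y : Matrix (Fin n) (Fin m) ℝ}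
    (hX : IsMP P X) (hY : IsMP Q Y)
    (h : LinearMap.range P.mulVecLin = LinearMap.range Q.mulVecLin) : P * X = Q * Y := by
  have hPQ : P * X * (Q * Y) = Q * Y := by rw [← Matrix.mul_assoc, mul_mul_eq_of_range_le hX.1 h.ge]
  have hQP : Q * Y * (P * X) = P * X := by rw [← Matrix.mul_assoc, mul_mul_eq_of_range_le hY.1 h.le]
  calc P * X = (Q * Y * (P * X))ᵀ := by rw [hQP, hX.2.2.1]
    _ = P * X * (Q * Y) := by rw [Matrix.transpose_mul, hX.2.2.1, hY.2.2.1]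
    _ = Q * Y := hPQ

lemma IsMP.mul_eq_mul_of_ker_eq {P Q : Matrix (Fin m) (Fin n) ℝ} {X Y : Matrix (Fin n) (Fin m) ℝ}
    (hX : IsMP P X) (hY : IsMP Q Y)
    (h : LinearMap.ker P.mulVecLin = LinearMap.ker Q.mulVecLin) : X * P = Y * Q := by
  have hPQ : X * P * (Y * Q) = X * P := by
    rw [Matrix.mul_assoc, ← Matrix.mul_assoc P, mul_mul_eq_of_ker_le hY.1 h.ge]
  have hQP : Y * Q * (X * P) = Y * Q := by
    rw [Matrix.mul_assoc, ← Matrix.mul_assoc Q, mul_mul_eq_of_ker_le hX.1 h.le]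
  calc X * P = (X * P * (Y * Q))ᵀ := by rw [hPQ, hX.2.2.2]
    _ = Y * Q * (X * P) := by rw [Matrix.transpose_mul, hX.2.2.2, hY.2.2.2]
    _ = Y * Q := hQP

end MoorePenrose

namespace MatLE

variable {m n p : ℕ} {A : Matrix (Fin m) (Fin n) ℝ} {B : Matrix (Fin n) (Fin p) ℝ}

lemma mul_nonneg (hA : MatLE 0 A) (hB : MatLE 0 B) : MatLE 0 (A * B) := fun i j => by
  simpa [Matrix.mul_apply] using Finset.sum_nonneg fun k _ =>
    _root_.mul_nonneg (by simpa using hA i k) (by simpa using hB k j)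

lemma mul_nonneg_of_nonpos_of_nonpos (hA : MatLE A 0) (hB : MatLE B 0) : MatLE 0 (A * B) :=
  fun i j => by
    simpa [Matrix.mul_apply] using Finset.sum_nonneg fun k _ =>
      _root_.mul_nonneg_of_nonpos_of_nonpos (by simpa using hA i k) (by simpa using hB k j)

lemma mul_nonpos_of_nonpos_of_nonneg (hA : MatLE A 0) (hB : MatLE 0 B) : MatLE (A * B) 0 :=
  fun i j => by
    simpa [Matrix.mul_apply] using Finset.sum_nonpos fun k _ =>
      _root_.mul_nonpos_of_nonpos_of_nonneg (by simpa using hA i k) (by simpa using hB k j)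

lemma pow_nonneg {M : Matrix (Fin n) (Fin n) ℝ} (hM : MatLE 0 M) (k : ℕ) : MatLE 0 (M ^ k) := by
  induction k with
  | zero => intro i j; simp [Matrix.one_apply, apply_ite]
  | succ k ih => rw [pow_succ]; exact ih.mul_nonneg hM

end MatLE

lemma geom_sum_mul_sub_of_mul_eq {R : Type*} [Ring R] {h q : R} (hq : h * q = h) (k : ℕ) :
    (∑ j ∈ Finset.range (k + 1), h ^ j) * (q - h) = q - h ^ (k + 1) := by
  induction k with
  | zero => simp
  | succ k ih =>
    have hpow : h ^ (k + 1) * q = h ^ (k + 1) := by rw [pow_succ, mul_assoc, hq]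
    rw [Finset.sum_range_succ, add_mul, ih, mul_sub, hpow, ← pow_succ]
    abel

section Convergence

variable {m n : ℕ}

lemma tendsto_pow_mul_of_sum_le {M : Matrix (Fin n) (Fin n) ℝ} {X K : Matrix (Fin n) (Fin m) ℝ}
    (hM : MatLE 0 M) (hX : MatLE 0 X) (h : ∀ k, MatLE (∑ j ∈ Finset.range k, M ^ j * X) K) :
    Tendsto (fun k => M ^ k * X) atTop (𝓝 0) := by
  refine tendsto_pi_nhds.2 fun i => tendsto_pi_nhds.2 fun j => ?_
  refine (summable_of_sum_range_le (c := K i j)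
    (fun k => by simpa using (hM.pow_nonneg k).mul_nonneg hX i j)
    fun k => ?_).tendsto_atTop_zero
  simpa [Matrix.sum_apply] using h k i j

lemma tendsto_pow_of_sub_mul_eq {H Q : Matrix (Fin n) (Fin n) ℝ} {X Z : Matrix (Fin n) (Fin m) ℝ}
    {V : Matrix (Fin m) (Fin n) ℝ} (hH : MatLE 0 H) (hX : MatLE 0 X) (hZ : MatLE 0 Z)
    (hXV : X * V = H) (hHQ : H * Q = H) (hQHZ : (Q - H) * Z = X) :
    Tendsto (fun k => H ^ k) atTop (𝓝 0) := by
  have hsum : ∀ k, ∑ j ∈ Finset.range (k + 1), H ^ j * X = Q * Z - H ^ (k + 1) * Z := fun k => by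
    rw [← Matrix.sum_mul, ← hQHZ, ← Matrix.mul_assoc, geom_sum_mul_sub_of_mul_eq hHQ,
      Matrix.sub_mul]
  have hbound : ∀ k, MatLE (∑ j ∈ Finset.range k, H ^ j * X) (Q * Z) := fun k i j =>
    calc (∑ j ∈ Finset.range k, H ^ j * X) i j
        ≤ (∑ j ∈ Finset.range (k + 1), H ^ j * X) i j := by
          rw [Finset.sum_range_succ, Matrix.add_apply]
          exact le_add_of_nonneg_right ((hH.pow_nonneg k).mul_nonneg hX i j)
      _ = (Q * Z) i j - (H ^ (k + 1) * Z) i j := by rw [hsum, Matrix.sub_apply]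
      _ ≤ (Q * Z) i j := sub_le_self _ ((hH.pow_nonneg _).mul_nonneg hZ i j)
  have hlim : Tendsto (fun k => H ^ k * X * V) atTop (𝓝 0) :=
    ((continuous_id.matrix_mul continuous_const).tendsto' 0 0 (by simp)).comp
      (tendsto_pow_mul_of_sum_le hH hX hbound)
  rw [← tendsto_add_atTop_iff_nat 1]
  simpa [pow_succ, Matrix.mul_assoc, hXV] using hlim

lemma tendsto_pow_pinv_mul_of_weak_regular {Â P N : Matrix (Fin m) (Fin n) ℝ}
    {X Z : Matrix (Fin n) (Fin m) ℝ} (hX : IsMP P X) (hZ : IsMP Â Z) (hsplit : Â = P - N)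
    (hrange : LinearMap.range Â.mulVecLin = LinearMap.range P.mulVecLin)
    (hker : LinearMap.ker P.mulVecLin ≤ LinearMap.ker Â.mulVecLin)
    (hX₀ : MatLE 0 X) (hXN : MatLE 0 (X * N)) (hZ₀ : MatLE 0 Z) :
    Tendsto (fun k => (X * N) ^ k) atTop (𝓝 0) := by
  have hNXP : N * X * P = N := by
    have hÂXP : Â * X * P = Â := mul_mul_eq_of_ker_le hX.1 hker
    rw [show N = P - Â by rw [hsplit]; abel, Matrix.sub_mul, Matrix.sub_mul, hX.1, hÂXP]
  have hÂZ : Â * Z = P * X := hZ.mul_eq_mul_of_range_eq hX hrange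
  refine tendsto_pow_of_sub_mul_eq (Q := X * P) (V := N) hXN hX₀ hZ₀ rfl ?_ ?_
  · simp only [Matrix.mul_assoc] at hNXP ⊢
    rw [hNXP]
  · rw [← Matrix.mul_sub, ← hsplit, Matrix.mul_assoc, hÂZ, ← Matrix.mul_assoc, hX.2.1]

end Convergence

section InducedSplitting

variable {m n : ℕ} {A Pa Ra Sa Pb Rb Sb : Matrix (Fin m) (Fin n) ℝ}
  {Xa Xb Z : Matrix (Fin n) (Fin m) ℝ}

lemma one_sub_mul_mul_eq_sub (hXa : Pa * Xa * Pa = Pa) (hsa : A = Pa - Ra + Sa)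
    (hsb : A = Pb - Rb + Sb)
    (hkera : LinearMap.ker Pa.mulVecLin = LinearMap.ker A.mulVecLin)
    (hkerb : LinearMap.ker Pb.mulVecLin = LinearMap.ker A.mulVecLin)
    (hNSb : LinearMap.ker Pb.mulVecLin ≤ LinearMap.ker Sb.mulVecLin) :
    (1 - Sb * Xa) * A = Pb - (Rb - Sb * Xa * Ra + Sb * Xa * Sa) := by
  have hSXP : Sb * Xa * Pa = Sb :=
    mul_mul_eq_of_ker_le hXa ((hkera.trans hkerb.symm).trans_le hNSb)
  have hSXA : Sb * Xa * A = Sb - Sb * Xa * Ra + Sb * Xa * Sa := by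
    rw [hsa, Matrix.mul_add, Matrix.mul_sub, hSXP]
  rw [Matrix.sub_mul, Matrix.one_mul, hSXA]
  nth_rewrite 1 [hsb]
  abel

lemma range_one_sub_mul_mul_eq (hunit : IsUnit (1 - Sb * Xa))
    (hrangeb : LinearMap.range Pb.mulVecLin = LinearMap.range A.mulVecLin)
    (hRSb : LinearMap.range Sb.mulVecLin ≤ LinearMap.range Pb.mulVecLin) :
    LinearMap.range ((1 - Sb * Xa) * A).mulVecLin = LinearMap.range Pb.mulVecLin := by
  rw [hrangeb]
  refine range_mulVecLin_mul_eq_of_isUnit hunit ?_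
  rintro _ ⟨x, rfl⟩
  have hS : Sb *ᵥ (Xa *ᵥ (A *ᵥ x)) ∈ LinearMap.range A.mulVecLin := hrangeb ▸ hRSb ⟨_, rfl⟩
  simpa [Matrix.sub_mul, Matrix.sub_mulVec, Matrix.mulVec_mulVec, Matrix.mul_assoc] using
    sub_mem (LinearMap.mem_range_self A.mulVecLin x) hS

lemma MatLE.mul_sub_mul_mul_nonneg (hbR : MatLE 0 (Xb * Rb)) (hbS : MatLE (Xb * Sb) 0)
    (haR : MatLE 0 (Xa * Ra)) : MatLE 0 (Xb * Rb - Xb * Sb * Xa * Ra) := fun i j => by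
  have h := (hbS.mul_nonpos_of_nonpos_of_nonneg haR) i j
  simp only [Matrix.zero_apply, Matrix.mul_assoc] at h hbR ⊢
  simpa only [Matrix.sub_apply, sub_nonneg] using h.trans (hbR i j)

lemma MatLE.mul_mul_mul_nonneg (hbS : MatLE (Xb * Sb) 0) (haS : MatLE (Xa * Sa) 0) :
    MatLE 0 (Xb * Sb * Xa * Sa) := by
  simpa only [Matrix.mul_assoc] using hbS.mul_nonneg_of_nonpos_of_nonpos haS

lemma pinv_mul_one_sub_mul_mul_eq_and_tendsto_pow (hXa : Pa * Xa * Pa = Pa) (hXb : IsMP Pb Xb)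
    (hZ : IsMP ((1 - Sb * Xa) * A) Z) (hsa : A = Pa - Ra + Sa) (hsb : A = Pb - Rb + Sb)
    (hkera : LinearMap.ker Pa.mulVecLin = LinearMap.ker A.mulVecLin)
    (hrangeb : LinearMap.range Pb.mulVecLin = LinearMap.range A.mulVecLin)
    (hkerb : LinearMap.ker Pb.mulVecLin = LinearMap.ker A.mulVecLin)
    (hNSb : LinearMap.ker Pb.mulVecLin ≤ LinearMap.ker Sb.mulVecLin)
    (hRSb : LinearMap.range Sb.mulVecLin ≤ LinearMap.range Pb.mulVecLin)
    (hunit : IsUnit (1 - Sb * Xa)) (hXb₀ : MatLE 0 Xb) (hbR : MatLE 0 (Xb * Rb))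
    (hbS : MatLE (Xb * Sb) 0) (haR : MatLE 0 (Xa * Ra)) (haS : MatLE (Xa * Sa) 0)
    (hZ₀ : MatLE 0 Z) :
    Xb * ((1 - Sb * Xa) * A)
        = Xb * Pb - (Xb * Rb - Xb * Sb * Xa * Ra + Xb * Sb * Xa * Sa) ∧
      Tendsto (fun k => (Xb * Rb - Xb * Sb * Xa * Ra + Xb * Sb * Xa * Sa) ^ k) atTop (𝓝 0) := by
  have hÂ := one_sub_mul_mul_eq_sub hXa hsa hsb hkera hkerb hNSb
  have hXN : Xb * (Rb - Sb * Xa * Ra + Sb * Xa * Sa)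
      = Xb * Rb - Xb * Sb * Xa * Ra + Xb * Sb * Xa * Sa := by
    simp only [Matrix.mul_add, Matrix.mul_sub, Matrix.mul_assoc]
  have hker : LinearMap.ker Pb.mulVecLin ≤ LinearMap.ker ((1 - Sb * Xa) * A).mulVecLin := by
    rw [hkerb, Matrix.mulVecLin_mul]
    exact LinearMap.ker_le_ker_comp _ _
  have hXN₀ : MatLE 0 (Xb * (Rb - Sb * Xa * Ra + Sb * Xa * Sa)) := fun i j => by
    simpa [hXN] using add_nonneg (by simpa using (MatLE.mul_sub_mul_mul_nonneg hbR hbS haR) i j)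
      (by simpa using (MatLE.mul_mul_mul_nonneg hbS haS) i j)
  refine ⟨by rw [hÂ, Matrix.mul_sub, hXN], hXN ▸ ?_⟩
  exact tendsto_pow_pinv_mul_of_weak_regular hXb hZ hÂ
    (range_one_sub_mul_mul_eq hunit hrangeb hRSb) hker hXb₀ hXN₀ hZ₀

end InducedSplitting

section NonnegativeMatrices

variable {ι : Type*} [Fintype ι]

lemma Matrix.norm_map_ofReal_mulVec_le {M : Matrix ι ι ℝ} (hM : ∀ i j, 0 ≤ M i j) (v : ι → ℂ)
    (i : ι) : ‖(M.map Complex.ofReal *ᵥ v) i‖ ≤ (M *ᵥ fun j => ‖v j‖) i :=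
  (norm_sum_le _ _).trans_eq <| Finset.sum_congr rfl fun j _ => by
    simp [Complex.norm_real, abs_of_nonneg (hM i j)]

lemma Matrix.mulVec_le_mulVec_of_le {M N : Matrix ι ι ℝ} (h : ∀ i j, M i j ≤ N i j) {w : ι → ℝ}
    (hw : 0 ≤ w) : M *ᵥ w ≤ N *ᵥ w := fun i =>
  Finset.sum_le_sum fun j _ => mul_le_mul_of_nonneg_right (h i j) (hw j)

variable [DecidableEq ι]

lemma Matrix.pow_smul_le_pow_mulVec {M : Matrix ι ι ℝ} (hM : ∀ i j, 0 ≤ M i j) {z : ι → ℝ}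
    {s : ℝ} (hs : 0 ≤ s) (h : s • z ≤ M *ᵥ z) (k : ℕ) : s ^ k • z ≤ (M ^ k) *ᵥ z := by
  have hmono : Monotone (M *ᵥ ·) := fun x y hxy i =>
    Finset.sum_le_sum fun j _ => mul_le_mul_of_nonneg_left (hxy j) (hM i j)
  induction k with
  | zero => simp
  | succ k ih =>
    calc s ^ (k + 1) • z = s ^ k • (s • z) := by rw [pow_succ, mul_smul]
      _ ≤ s ^ k • (M *ᵥ z) := smul_le_smul_of_nonneg_left h (pow_nonneg hs k)
      _ = M *ᵥ (s ^ k • z) := (Matrix.mulVec_smul M _ z).symm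
      _ ≤ M *ᵥ ((M ^ k) *ᵥ z) := hmono ih
      _ = (M ^ (k + 1)) *ᵥ z := by rw [Matrix.mulVec_mulVec, pow_succ']

lemma eq_zero_of_le_mulVec_of_tendsto_pow {M : Matrix ι ι ℝ} (hM : ∀ i j, 0 ≤ M i j)
    (hlim : Tendsto (fun k => M ^ k) atTop (𝓝 0)) {w : ι → ℝ} (hw : 0 ≤ w)
    (h : w ≤ M *ᵥ w) : w = 0 := by
  have hle : ∀ k : ℕ, w ≤ (M ^ k) *ᵥ w := fun k => by
    simpa using Matrix.pow_smul_le_pow_mulVec hM zero_le_one (by simpa using h) k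
  have hlimv : Tendsto (fun k => (M ^ k) *ᵥ w) atTop (𝓝 0) :=
    ((continuous_id.matrix_mulVec continuous_const).tendsto' 0 0 (by simp)).comp hlim
  exact le_antisymm (ge_of_tendsto' hlimv hle) hw

end NonnegativeMatrices

section SpectralRadius

attribute [local instance] Matrix.linftyOpNormedAddCommGroup Matrix.linftyOpNormedRing
  Matrix.linftyOpNormedAlgebra

lemma Matrix.linfty_opNorm_map_ofReal {ι κ : Type*} [Fintype ι] [Fintype κ] (M : Matrix ι κ ℝ) :
    ‖M.map Complex.ofReal‖ = ‖M‖ := by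
  simp [Matrix.linfty_opNorm_def]

lemma spectrum.ofReal_le_spectralRadius_of_pow_le_norm {A : Type*} [NormedRing A]
    [NormedAlgebra ℂ A] [CompleteSpace A] (a : A) {s : ℝ} (hs : 0 ≤ s)
    (h : ∀ k : ℕ, s ^ k ≤ ‖a ^ k‖) : ENNReal.ofReal s ≤ spectralRadius ℂ a := by
  refine ge_of_tendsto (spectrum.pow_norm_pow_one_div_tendsto_nhds_spectralRadius a) ?_
  filter_upwards [eventually_ne_atTop 0] with k hk
  gcongr
  calc s = (s ^ k) ^ (1 / k : ℝ) := by rw [one_div, Real.pow_rpow_inv_natCast hs hk]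
    _ ≤ ‖a ^ k‖ ^ (1 / k : ℝ) := by gcongr; exact h k

variable {ι : Type*} [Fintype ι] [DecidableEq ι]

lemma Matrix.exists_mulVec_eq_smul_of_mem_spectrum {K : Type*} [Field K] {M : Matrix ι ι K}
    {μ : K} (h : μ ∈ spectrum K M) : ∃ v ≠ 0, M *ᵥ v = μ • v := by
  rw [← Matrix.spectrum_toLin', ← Module.End.hasEigenvalue_iff_mem_spectrum] at h
  obtain ⟨v, hv⟩ := h.exists_hasEigenvector
  exact ⟨v, hv.2, by simpa using hv.apply_eq_smul⟩

lemma specRad_nonneg (M : Matrix ι ι ℝ) : 0 ≤ specRad M :=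
  Real.sSup_nonneg fun _ ⟨_, _, h⟩ => h ▸ norm_nonneg _

lemma norm_le_specRad {M : Matrix ι ι ℝ} {μ : ℂ} (hμ : μ ∈ spectrum ℂ (M.map Complex.ofReal)) :
    ‖μ‖ ≤ specRad M :=
  le_csSup ((Matrix.finite_spectrum _).image _).bddAbove ⟨μ, hμ, rfl⟩

lemma exists_mem_spectrum_norm_eq_specRad {M : Matrix ι ι ℝ} (h : 0 < specRad M) :
    ∃ μ ∈ spectrum ℂ (M.map Complex.ofReal), ‖μ‖ = specRad M := by
  refine Set.Nonempty.csSup_mem ?_ ((Matrix.finite_spectrum _).image _)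
  by_contra hempty
  simp [specRad, Set.not_nonempty_iff_eq_empty.mp hempty] at h

lemma spectralRadius_le_ofReal_specRad (M : Matrix ι ι ℝ) :
    spectralRadius ℂ (M.map Complex.ofReal) ≤ ENNReal.ofReal (specRad M) :=
  iSup₂_le fun _ hμ => by
    rw [← enorm_eq_nnnorm, ← ofReal_norm]
    exact ENNReal.ofReal_le_ofReal (norm_le_specRad hμ)

lemma le_specRad_of_smul_le_mulVec {M : Matrix ι ι ℝ} (hM : ∀ i j, 0 ≤ M i j) {z : ι → ℝ}
    (hz : 0 ≤ z) (hz₀ : z ≠ 0) {s : ℝ} (hs : 0 ≤ s) (h : s • z ≤ M *ᵥ z) : s ≤ specRad M := by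
  have hpow : ∀ k : ℕ, s ^ k ≤ ‖(M.map Complex.ofReal) ^ k‖ := by
    intro k
    have hnorm : s ^ k * ‖z‖ ≤ ‖(M ^ k) *ᵥ z‖ := by
      rw [← Real.norm_of_nonneg (pow_nonneg hs k), ← norm_smul]
      refine pi_norm_le_iff_of_nonneg (norm_nonneg _) |>.2 fun i => ?_
      have hi := Matrix.pow_smul_le_pow_mulVec hM hs h k i
      have hi₀ : 0 ≤ (s ^ k • z) i := smul_nonneg (pow_nonneg hs k) (hz i)
      exact (abs_le_abs_of_nonneg hi₀ hi).trans (norm_le_pi_norm ((M ^ k) *ᵥ z) i)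
    have hmap : (M.map Complex.ofReal) ^ k = (M ^ k).map Complex.ofReal :=
      (M.map_pow Complex.ofRealHom k).symm
    rw [hmap, Matrix.linfty_opNorm_map_ofReal]
    exact le_of_mul_le_mul_right (hnorm.trans (Matrix.linfty_opNorm_mulVec _ _))
      (norm_pos_iff.2 hz₀)
  have := (spectrum.ofReal_le_spectralRadius_of_pow_le_norm _ hs hpow).trans
    (spectralRadius_le_ofReal_specRad M)
  exact (ENNReal.ofReal_le_ofReal_iff (specRad_nonneg M)).1 this

end SpectralRadius

section BlockCompanion

variable {ι : Type*} [DecidableEq ι]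

/-- The companion matrix of the quadratic pencil `λ² - λB - C`. -/
abbrev blockCompanion (B C : Matrix ι ι ℝ) : Matrix (ι ⊕ ι) (ι ⊕ ι) ℝ := fromBlocks B C 1 0

lemma blockCompanion_nonneg {B C : Matrix ι ι ℝ} (hB : ∀ i j, 0 ≤ B i j)
    (hC : ∀ i j, 0 ≤ C i j) : ∀ i j, 0 ≤ blockCompanion B C i j := by
  rintro (i | i) (j | j) <;> simp [hB, hC, Matrix.one_apply, apply_ite]

variable [Fintype ι]

lemma exists_nonneg_of_mem_spectrum_blockCompanion {B C : Matrix ι ι ℝ} (hB : ∀ i j, 0 ≤ B i j)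
    (hC : ∀ i j, 0 ≤ C i j) {μ : ℂ}
    (hμ : μ ∈ spectrum ℂ ((blockCompanion B C).map Complex.ofReal)) :
    ∃ w : ι → ℝ, 0 ≤ w ∧ w ≠ 0 ∧ ‖μ‖ ^ 2 • w ≤ (‖μ‖ • B + C) *ᵥ w := by
  obtain ⟨v, hv, hvμ⟩ := Matrix.exists_mulVec_eq_smul_of_mem_spectrum hμ
  obtain ⟨x, y, rfl⟩ : ∃ x y : ι → ℂ, v = Sum.elim x y :=
    ⟨v ∘ Sum.inl, v ∘ Sum.inr, by ext (i | i) <;> rfl⟩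
  rw [Matrix.fromBlocks_map, Matrix.fromBlocks_mulVec] at hvμ
  have hx : x = μ • y := funext fun i => by simpa using congrFun hvμ (Sum.inr i)
  have hy : ∀ i, μ ^ 2 * y i
      = μ * (B.map Complex.ofReal *ᵥ y) i + (C.map Complex.ofReal *ᵥ y) i := fun i => by
    have := congrFun hvμ (Sum.inl i)
    simp only [Sum.elim_comp_inl, Sum.elim_comp_inr, Sum.elim_inl, Pi.add_apply,
      Pi.smul_apply, smul_eq_mul, hx, Matrix.mulVec_smul] at this
    linear_combination -this
  refine ⟨fun i => ‖y i‖, fun i => norm_nonneg _, fun h0 => hv ?_, fun i => ?_⟩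
  · have hy0 : y = 0 := funext fun i => norm_eq_zero.1 (congrFun h0 i)
    simp [hx, hy0]
  · calc ‖μ‖ ^ 2 * ‖y i‖
        = ‖μ * (B.map Complex.ofReal *ᵥ y) i + (C.map Complex.ofReal *ᵥ y) i‖ := by
          rw [← hy, norm_mul, norm_pow]
      _ ≤ ‖μ‖ * ‖(B.map Complex.ofReal *ᵥ y) i‖ + ‖(C.map Complex.ofReal *ᵥ y) i‖ :=
          (norm_add_le _ _).trans_eq (by rw [norm_mul])
      _ ≤ ‖μ‖ * (B *ᵥ fun j => ‖y j‖) i + (C *ᵥ fun j => ‖y j‖) i := by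
          gcongr
          · exact Matrix.norm_map_ofReal_mulVec_le hB y i
          · exact Matrix.norm_map_ofReal_mulVec_le hC y i
      _ = ((‖μ‖ • B + C) *ᵥ fun j => ‖y j‖) i := by
          simp [Matrix.add_mulVec, Matrix.smul_mulVec]

lemma le_specRad_blockCompanion {B C : Matrix ι ι ℝ} (hB : ∀ i j, 0 ≤ B i j)
    (hC : ∀ i j, 0 ≤ C i j) {w : ι → ℝ} (hw : 0 ≤ w) (hw₀ : w ≠ 0) {s : ℝ} (hs : 0 ≤ s)
    (h : s ^ 2 • w ≤ (s • B + C) *ᵥ w) : s ≤ specRad (blockCompanion B C) := by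
  refine le_specRad_of_smul_le_mulVec (blockCompanion_nonneg hB hC) (z := Sum.elim (s • w) w)
    ?_ (fun h0 => hw₀ (funext fun i => congrFun h0 (Sum.inr i))) hs ?_
  · rintro (i | i)
    exacts [mul_nonneg hs (hw i), hw i]
  · rw [Matrix.fromBlocks_mulVec]
    rintro (i | i)
    · have := h i
      simp only [Pi.smul_apply, smul_eq_mul, Matrix.add_mulVec, Matrix.smul_mulVec,
        Pi.add_apply] at this
      simp only [Sum.elim_inl, Sum.elim_comp_inl, Sum.elim_comp_inr, Pi.add_apply, Pi.smul_apply,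
        smul_eq_mul, Matrix.mulVec_smul, Matrix.one_mulVec, Matrix.zero_mulVec, add_zero]
      nlinarith
    · simp

lemma specRad_blockCompanion_lt_one {B C : Matrix ι ι ℝ} (hB : ∀ i j, 0 ≤ B i j)
    (hC : ∀ i j, 0 ≤ C i j) (hlim : Tendsto (fun k => (B + C) ^ k) atTop (𝓝 0)) :
    specRad (blockCompanion B C) < 1 := by
  by_contra! hρ
  obtain ⟨μ, hμ, hμρ⟩ := exists_mem_spectrum_norm_eq_specRad (zero_lt_one.trans_le hρ)
  obtain ⟨w, hw, hw₀, hpencil⟩ := exists_nonneg_of_mem_spectrum_blockCompanion hB hC hμ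
  rw [hμρ] at hpencil
  refine hw₀ (eq_zero_of_le_mulVec_of_tendsto_pow (M := B + C)
    (fun i j => add_nonneg (hB i j) (hC i j)) hlim hw fun i => ?_)
  have hi := hpencil i
  have hCw : 0 ≤ (C *ᵥ w) i := Finset.sum_nonneg fun j _ => mul_nonneg (hC i j) (hw j)
  rw [Matrix.add_mulVec, Pi.add_apply]
  simp only [Pi.smul_apply, smul_eq_mul, Matrix.add_mulVec, Matrix.smul_mulVec, Pi.add_apply] at hi
  have hρw : specRad (blockCompanion B C) * w i ≤ (B *ᵥ w) i + (C *ᵥ w) i :=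
    le_of_mul_le_mul_left (by nlinarith) (zero_lt_one.trans_le hρ)
  have hwi : 0 ≤ w i := hw i
  nlinarith

lemma specRad_blockCompanion_le {B₁ C₁ B₂ C₂ : Matrix ι ι ℝ} (hB₁ : ∀ i j, 0 ≤ B₁ i j)
    (hC₁ : ∀ i j, 0 ≤ C₁ i j) (hB₂ : ∀ i j, 0 ≤ B₂ i j)
    (hsum : ∀ i j, B₁ i j + C₁ i j ≤ B₂ i j + C₂ i j) (hB : ∀ i j, B₂ i j ≤ B₁ i j)
    (hρ : specRad (blockCompanion B₁ C₁) ≤ 1) :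
    specRad (blockCompanion B₁ C₁) ≤ specRad (blockCompanion B₂ C₂) := by
  rcases (specRad_nonneg (blockCompanion B₁ C₁)).eq_or_lt with hρ0 | hρ0
  · rw [← hρ0]
    exact specRad_nonneg _
  obtain ⟨μ, hμ, hμρ⟩ := exists_mem_spectrum_norm_eq_specRad hρ0
  obtain ⟨w, hw, hw₀, hpencil⟩ := exists_nonneg_of_mem_spectrum_blockCompanion hB₁ hC₁ hμ
  rw [hμρ] at hpencil
  have hC : ∀ i j, C₁ i j ≤ C₂ i j := fun i j => by linarith [hsum i j, hB i j]
  refine le_specRad_blockCompanion hB₂ (fun i j => (hC₁ i j).trans (hC i j)) hw hw₀ hρ0.le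
    (hpencil.trans (Matrix.mulVec_le_mulVec_of_le (fun i j => ?_) hw))
  simp only [Matrix.add_apply, Matrix.smul_apply, smul_eq_mul]
  nlinarith [hsum i j, hC i j]

end BlockCompanion

theorem tgads_pair_comparison_W12_W34_general {m n : ℕ}
    (A P₁ R₁ S₁ P₂ R₂ S₂ P₃ R₃ S₃ P₄ R₄ S₄ : Matrix (Fin m) (Fin n) ℝ)
    (X₁ X₂ X₃ X₄ Xhat₁ Xhat₂ : Matrix (Fin n) (Fin m) ℝ)
    (hX₁ : IsMP P₁ X₁)
    (hX₂ : IsMP P₂ X₂)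
    (hX₃ : IsMP P₃ X₃)
    (hX₄ : IsMP P₄ X₄)
    (hsplit₁ : A = P₁ - R₁ + S₁)
    (hker₁ : LinearMap.ker (P₁).mulVecLin = LinearMap.ker (A).mulVecLin)
    (hwr₁b : MatLE 0 (X₁ * R₁))
    (hwr₁c : MatLE (X₁ * S₁) 0)
    (hsplit₂ : A = P₂ - R₂ + S₂)
    (hrange₂ : LinearMap.range (P₂).mulVecLin = LinearMap.range (A).mulVecLin)
    (hker₂ : LinearMap.ker (P₂).mulVecLin = LinearMap.ker (A).mulVecLin)
    (hwr₂a : MatLE 0 X₂)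
    (hwr₂b : MatLE 0 (X₂ * R₂))
    (hwr₂c : MatLE (X₂ * S₂) 0)
    (hsplit₃ : A = P₃ - R₃ + S₃)
    (hker₃ : LinearMap.ker (P₃).mulVecLin = LinearMap.ker (A).mulVecLin)
    (hwr₃b : MatLE 0 (X₃ * R₃))
    (hwr₃c : MatLE (X₃ * S₃) 0)
    (hsplit₄ : A = P₄ - R₄ + S₄)
    (hrange₄ : LinearMap.range (P₄).mulVecLin = LinearMap.range (A).mulVecLin)
    (hker₄ : LinearMap.ker (P₄).mulVecLin = LinearMap.ker (A).mulVecLin)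
    (hwr₄a : MatLE 0 X₄)
    (hwr₄b : MatLE 0 (X₄ * R₄))
    (hwr₄c : MatLE (X₄ * S₄) 0)
    (hNS2 : LinearMap.ker (P₂).mulVecLin ≤ LinearMap.ker (S₂).mulVecLin)
    (hRS2 : LinearMap.range (S₂).mulVecLin ≤ LinearMap.range (P₂).mulVecLin)
    (hNS4 : LinearMap.ker (P₄).mulVecLin ≤ LinearMap.ker (S₄).mulVecLin)
    (hRS4 : LinearMap.range (S₄).mulVecLin ≤ LinearMap.range (P₄).mulVecLin)
    (hunit1 : IsUnit (1 - S₂ * X₁))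
    (hunit2 : IsUnit (1 - S₄ * X₃))
    (hXhat1 : IsMP ((1 - S₂ * X₁) * A) Xhat₁)
    (hXhat2 : IsMP ((1 - S₄ * X₃) * A) Xhat₂)
    (hXhat1pos : MatLE 0 Xhat₁)
    (hXhat2pos : MatLE 0 Xhat₂)
    (hc1 : MatLE (X₄ * ((1 - S₄ * X₃) * A)) (X₂ * ((1 - S₂ * X₁) * A)))
    (hc2 : MatLE (X₄ * (R₄ - S₄ * X₃ * R₃)) (X₂ * (R₂ - S₂ * X₁ * R₁)))
    : specRad (Matrix.fromBlocks (X₂ * R₂ - X₂ * S₂ * X₁ * R₁) (X₂ * S₂ * X₁ * S₁) 1 0) ≤ specRad (Matrix.fromBlocks (X₄ * R₄ - X₄ * S₄ * X₃ * R₃) (X₄ * S₄ * X₃ * S₃) 1 0) ∧ specRad (Matrix.fromBlocks (X₄ * R₄ - X₄ * S₄ * X₃ * R₃) (X₄ * S₄ * X₃ * S₃) 1 0) < 1 := by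
  obtain ⟨hÂ₁, hlim₁⟩ := pinv_mul_one_sub_mul_mul_eq_and_tendsto_pow hX₁.1 hX₂ hXhat1 hsplit₁
    hsplit₂ hker₁ hrange₂ hker₂ hNS2 hRS2 hunit1 hwr₂a hwr₂b hwr₂c hwr₁b hwr₁c hXhat1pos
  obtain ⟨hÂ₂, hlim₂⟩ := pinv_mul_one_sub_mul_mul_eq_and_tendsto_pow hX₃.1 hX₄ hXhat2 hsplit₃
    hsplit₄ hker₃ hrange₄ hker₄ hNS4 hRS4 hunit2 hwr₄a hwr₄b hwr₄c hwr₃b hwr₃c hXhat2pos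
  have hB₁ := MatLE.mul_sub_mul_mul_nonneg hwr₂b hwr₂c hwr₁b
  have hC₁ := MatLE.mul_mul_mul_nonneg hwr₂c hwr₁c
  have hB₂ := MatLE.mul_sub_mul_mul_nonneg hwr₄b hwr₄c hwr₃b
  have hC₂ := MatLE.mul_mul_mul_nonneg hwr₄c hwr₃c
  have hQ : X₂ * P₂ = X₄ * P₄ := hX₂.mul_eq_mul_of_ker_eq hX₄ (hker₂.trans hker₄.symm)
  refine ⟨specRad_blockCompanion_le hB₁ hC₁ hB₂ (fun i j => ?_) (fun i j => ?_)
    (specRad_blockCompanion_lt_one hB₁ hC₁ hlim₁).le, specRad_blockCompanion_lt_one hB₂ hC₂ hlim₂⟩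
  · have h := hc1 i j
    rw [hÂ₁, hÂ₂, hQ] at h
    simp only [Matrix.sub_apply, Matrix.add_apply] at h ⊢
    linarith
  · simpa only [Matrix.mul_sub, Matrix.mul_assoc] using hc2 i j

theorem tgads_pair_comparison_W12_W34 {m n : ℕ}
    (A P₁ R₁ S₁ P₂ R₂ S₂ P₃ R₃ S₃ P₄ R₄ S₄ : Matrix (Fin m) (Fin n) ℝ)
    (XA X₁ X₂ X₃ X₄ Xhat₁ Xhat₂ : Matrix (Fin n) (Fin m) ℝ)
    (hX₁ : IsMP P₁ X₁)
    (hX₂ : IsMP P₂ X₂)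
    (hX₃ : IsMP P₃ X₃)
    (hX₄ : IsMP P₄ X₄)
    (hXA : IsMP A XA)
    (hsemi : MatLE 0 XA)
    (hsplit₁ : A = P₁ - R₁ + S₁)
    (hrange₁ : LinearMap.range (P₁).mulVecLin = LinearMap.range (A).mulVecLin)
    (hker₁ : LinearMap.ker (P₁).mulVecLin = LinearMap.ker (A).mulVecLin)
    (hwr₁a : MatLE 0 X₁)
    (hwr₁b : MatLE 0 (X₁ * R₁))
    (hwr₁c : MatLE (X₁ * S₁) 0)
    (hsplit₂ : A = P₂ - R₂ + S₂)
    (hrange₂ : LinearMap.range (P₂).mulVecLin = LinearMap.range (A).mulVecLin)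
    (hker₂ : LinearMap.ker (P₂).mulVecLin = LinearMap.ker (A).mulVecLin)
    (hwr₂a : MatLE 0 X₂)
    (hwr₂b : MatLE 0 (X₂ * R₂))
    (hwr₂c : MatLE (X₂ * S₂) 0)
    (hsplit₃ : A = P₃ - R₃ + S₃)
    (hrange₃ : LinearMap.range (P₃).mulVecLin = LinearMap.range (A).mulVecLin)
    (hker₃ : LinearMap.ker (P₃).mulVecLin = LinearMap.ker (A).mulVecLin)
    (hwr₃a : MatLE 0 X₃)
    (hwr₃b : MatLE 0 (X₃ * R₃))
    (hwr₃c : MatLE (X₃ * S₃) 0)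
    (hsplit₄ : A = P₄ - R₄ + S₄)
    (hrange₄ : LinearMap.range (P₄).mulVecLin = LinearMap.range (A).mulVecLin)
    (hker₄ : LinearMap.ker (P₄).mulVecLin = LinearMap.ker (A).mulVecLin)
    (hwr₄a : MatLE 0 X₄)
    (hwr₄b : MatLE 0 (X₄ * R₄))
    (hwr₄c : MatLE (X₄ * S₄) 0)
    (hNS2 : LinearMap.ker (P₂).mulVecLin ≤ LinearMap.ker (S₂).mulVecLin)
    (hRS2 : LinearMap.range (S₂).mulVecLin ≤ LinearMap.range (P₂).mulVecLin)
    (hNS4 : LinearMap.ker (P₄).mulVecLin ≤ LinearMap.ker (S₄).mulVecLin)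
    (hRS4 : LinearMap.range (S₄).mulVecLin ≤ LinearMap.range (P₄).mulVecLin)
    (hunit1 : IsUnit (1 - S₂ * X₁))
    (hunit2 : IsUnit (1 - S₄ * X₃))
    (hXhat1 : IsMP ((1 - S₂ * X₁) * A) Xhat₁)
    (hXhat2 : IsMP ((1 - S₄ * X₃) * A) Xhat₂)
    (hXhat1pos : MatLE 0 Xhat₁)
    (hXhat2pos : MatLE 0 Xhat₂)
    (hc1 : MatLE (X₄ * ((1 - S₄ * X₃) * A)) (X₂ * ((1 - S₂ * X₁) * A)))
    (hc2 : MatLE (X₄ * (R₄ - S₄ * X₃ * R₃)) (X₂ * (R₂ - S₂ * X₁ * R₁)))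
    : specRad (Matrix.fromBlocks (X₂ * R₂ - X₂ * S₂ * X₁ * R₁) (X₂ * S₂ * X₁ * S₁) 1 0) ≤ specRad (Matrix.fromBlocks (X₄ * R₄ - X₄ * S₄ * X₃ * R₃) (X₄ * S₄ * X₃ * S₃) 1 0) ∧ specRad (Matrix.fromBlocks (X₄ * R₄ - X₄ * S₄ * X₃ * R₃) (X₄ * S₄ * X₃ * S₃) 1 0) < 1 :=
  tgads_pair_comparison_W12_W34_general A P₁ R₁ S₁ P₂ R₂ S₂ P₃ R₃ S₃ P₄ R₄ S₄ X₁ X₂ X₃ X₄ Xhat₁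
    Xhat₂ hX₁ hX₂ hX₃ hX₄ hsplit₁ hker₁ hwr₁b hwr₁c hsplit₂ hrange₂ hker₂ hwr₂a hwr₂b hwr₂c hsplit₃
    hker₃ hwr₃b hwr₃c hsplit₄ hrange₄ hker₄ hwr₄a hwr₄b hwr₄c hNS2 hRS2 hNS4 hRS4 hunit1 hunit2
    hXhat1 hXhat2 hXhat1pos hXhat2pos hc1 hc2
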